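/- Along any solution of the Sp(2)-invariant soliton system, the quantity M := 3x + τ̃₁ satisfies M' = ((y² + x²/2)/(xy²))·M − 3x²/y², and consequently d/dt (M/(xy²)) = −3x/y⁴; in particular M/(xy²) is strictly decreasing. -/

import Mathlib

/-!
Put `Q := x y²`. The ODE for `x²` gives `x' = 1 - x (x + 2τ₂) / (2y²)`, and with `(y²)' = x + τ₂`
this yields `Q' = x²/2 + y²`. Differentiating `M = 3x + τ̃₁` along the system shows that `M`
solves the linear equation `M' = (Q'/Q) M - 3x²/y²`, for which `Q` is an integrating factor:
`(M/Q)' = -3x²/(y² Q) = -3x/y⁴ < 0`.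
-/

/-- The Sp(2)-invariant soliton first-order ODE system for `(x, y, τ₂)`
with dilation constant `lam`, on a set `I`. -/
def sp2System (lam : ℝ) (x y τ : ℝ → ℝ) (I : Set ℝ) : Prop :=
  ∀ t ∈ I,
    HasDerivAt (fun s => x s ^ 2)
      (2 * x t - x t ^ 2 / y t ^ 2 * (x t + 2 * τ t)) t ∧
    HasDerivAt (fun s => y s ^ 2) (x t + τ t) t ∧
    HasDerivAt τ
      (4 * (lam * x t * y t ^ 2 - 3 * τ t) *
          (y t ^ 2 - x t ^ 2 - 3 / 2 * x t * τ t) /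
        (3 * x t * (x t ^ 2 + 2 * y t ^ 2))) t

/-- Adjusted torsion `τ̃₁ = 2x²(λxy² − 3τ₂)/(x² + 2y²)`. -/
noncomputable def tt1V (lam x y τ : ℝ) : ℝ :=
  2 * x ^ 2 * (lam * x * y ^ 2 - 3 * τ) / (x ^ 2 + 2 * y ^ 2)

/-- `M := 3x + τ̃₁`. -/
noncomputable def MV (lam x y τ : ℝ) : ℝ := 3 * x + tt1V lam x y τ

open Filter Topology

lemma HasDerivAt.of_sq {f : ℝ → ℝ} {d t : ℝ} (hf : ∀ᶠ s in 𝓝 t, 0 < f s)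
    (h : HasDerivAt (fun s => f s ^ 2) d t) : HasDerivAt f (d / (2 * f t)) t := by
  have hft : 0 < f t := hf.self_of_nhds
  have hsqrt := h.sqrt (by positivity)
  rw [Real.sqrt_sq hft.le] at hsqrt
  exact hsqrt.congr_of_eventuallyEq <| hf.mono fun s hs => (Real.sqrt_sq hs.le).symm

lemma HasDerivAt.div_of_linear {M Q : ℝ → ℝ} {q r t : ℝ}
    (hM : HasDerivAt M (q / Q t * M t - r) t) (hQ : HasDerivAt Q q t) (hQt : Q t ≠ 0) :
    HasDerivAt (fun s => M s / Q s) (-(r / Q t)) t := by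
  refine (hM.div hQ hQt).congr_deriv ?_
  field_simp
  ring

section sp2System

variable {lam : ℝ} {x y τ : ℝ → ℝ} {I : Set ℝ} {t : ℝ}

lemma sp2System.hasDerivAt_x (hsys : sp2System lam x y τ I) (hIo : IsOpen I)
    (hx : ∀ t ∈ I, 0 < x t) (ht : t ∈ I) :
    HasDerivAt x ((2 * x t - x t ^ 2 / y t ^ 2 * (x t + 2 * τ t)) / (2 * x t)) t :=
  (hsys t ht).1.of_sq <| eventually_of_mem (hIo.mem_nhds ht) hx

lemma sp2System.hasDerivAt_mul_sq (hsys : sp2System lam x y τ I) (hIo : IsOpen I)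
    (hx : ∀ t ∈ I, 0 < x t) (hy : ∀ t ∈ I, 0 < y t) (ht : t ∈ I) :
    HasDerivAt (fun s => x s * y s ^ 2) (y t ^ 2 + x t ^ 2 / 2) t := by
  have hxt := hx t ht
  have hyt := hy t ht
  refine ((hsys.hasDerivAt_x hIo hx ht).mul (hsys t ht).2.1).congr_deriv ?_
  field_simp
  ring

lemma sp2System.hasDerivAt_MV (hsys : sp2System lam x y τ I) (hIo : IsOpen I)
    (hx : ∀ t ∈ I, 0 < x t) (hy : ∀ t ∈ I, 0 < y t) (ht : t ∈ I) :
    HasDerivAt (fun s => MV lam (x s) (y s) (τ s))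
      ((y t ^ 2 + x t ^ 2 / 2) / (x t * y t ^ 2) * MV lam (x t) (y t) (τ t)
        - 3 * x t ^ 2 / y t ^ 2) t := by
  obtain ⟨hx2, hy2, hτ⟩ := hsys t ht
  have hx' := hsys.hasDerivAt_x hIo hx ht
  have hxt := hx t ht
  have hyt := hy t ht
  have hnum : HasDerivAt (fun s => 2 * x s ^ 2 * (lam * x s * y s ^ 2 - 3 * τ s)) _ t :=
    (hx2.const_mul 2).mul (((hx'.const_mul lam).mul hy2).sub (hτ.const_mul 3))
  have hden : HasDerivAt (fun s => x s ^ 2 + 2 * y s ^ 2) _ t := hx2.add (hy2.const_mul 2)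
  refine ((hx'.const_mul 3).add (hnum.div hden (by positivity))).congr_deriv ?_
  simp only [MV, tt1V]
  field_simp
  ring

lemma sp2System.hasDerivAt_MV_div (hsys : sp2System lam x y τ I) (hIo : IsOpen I)
    (hx : ∀ t ∈ I, 0 < x t) (hy : ∀ t ∈ I, 0 < y t) (ht : t ∈ I) :
    HasDerivAt (fun s => MV lam (x s) (y s) (τ s) / (x s * y s ^ 2)) (-(3 * x t / y t ^ 4)) t := by
  have hxt := hx t ht
  have hyt := hy t ht
  convert (hsys.hasDerivAt_MV hIo hx hy ht).div_of_linear
    (hsys.hasDerivAt_mul_sq hIo hx hy ht) (by positivity) using 2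
  field_simp

end sp2System

theorem stmt10 (lam : ℝ) (x y τ : ℝ → ℝ) (I : Set ℝ)
    (hIo : IsOpen I) (hIc : Convex ℝ I)
    (hx : ∀ t ∈ I, 0 < x t) (hy : ∀ t ∈ I, 0 < y t)
    (hsys : sp2System lam x y τ I) :
    (∀ t ∈ I,
      HasDerivAt (fun s => MV lam (x s) (y s) (τ s))
        ((y t ^ 2 + x t ^ 2 / 2) / (x t * y t ^ 2) * MV lam (x t) (y t) (τ t)
          - 3 * x t ^ 2 / y t ^ 2) t ∧
      HasDerivAt (fun s => MV lam (x s) (y s) (τ s) / (x s * y s ^ 2))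
        (-(3 * x t / y t ^ 4)) t) ∧
    StrictAntiOn (fun s => MV lam (x s) (y s) (τ s) / (x s * y s ^ 2)) I := by
  have hquot := fun t (ht : t ∈ I) => hsys.hasDerivAt_MV_div hIo hx hy ht
  refine ⟨fun t ht => ⟨hsys.hasDerivAt_MV hIo hx hy ht, hquot t ht⟩, ?_⟩
  refine strictAntiOn_of_hasDerivWithinAt_neg hIc (f' := fun t => -(3 * x t / y t ^ 4))
    (fun t ht => (hquot t ht).continuousAt.continuousWithinAt) ?_ ?_ <;> rw [hIo.interior_eq]
  · exact fun t ht => (hquot t ht).hasDerivWithinAt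
  · intro t ht
    have := hx t ht
    have := hy t ht
    exact neg_neg_of_pos (by positivity)
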